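/- Let ξ = (ξ_1,...,ξ_G) be a vector of reals in which the component ξ_s appears exactly once (ξ_g ≠ ξ_s for all g ≠ s), let σ_1,...,σ_G > 0, and let α_1,...,α_G be reals. If for every natural number z, ∑_{g=1}^G α_g · exp(ξ_g z + σ_g z²/2) = 0, then α_s = 0. -/

import Mathlib

/-!
For distinct pairs `(b, a)` the functions `z ↦ exp (a z + b z² / 2)` on `ℕ` are linearly
independent: ordered lexicographically, each is `o` of the next, so in a vanishing combination
dividing by the fastest-growing term shows that its coefficient vanishes, and induction removes it.
Grouping the terms of the hypothesis by `(σ g, ξ g)` then gives `∑ α g = 0` over each group, and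
the group of `s` is `{s}` because `ξ s` occurs only once.
-/

open Filter Topology Finset

theorem linearIndependent_of_tendsto_div_zero {α ι : Type*} [LinearOrder ι] {l : Filter α}
    [l.NeBot] {f : ι → α → ℝ} (hf : ∀ i, ∀ᶠ x in l, f i x ≠ 0)
    (hdom : ∀ ⦃i j⦄, i < j → Tendsto (fun x ↦ f i x / f j x) l (𝓝 0)) :
    LinearIndependent ℝ f := by
  rw [linearIndependent_iff']
  intro P c hsum
  simp only [funext_iff, Finset.sum_apply, Pi.smul_apply, smul_eq_mul, Pi.zero_apply] at hsum
  induction P using Finset.induction_on_max with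
  | empty => simp
  | insert a P hlt ih =>
    have ha : a ∉ P := fun h ↦ lt_irrefl a (hlt a h)
    simp only [sum_insert ha] at hsum
    have hlim : Tendsto (fun x ↦ c a + ∑ i ∈ P, c i * (f i x / f a x)) l (𝓝 (c a)) := by
      simpa using tendsto_const_nhds.add
        (tendsto_finsetSum P fun i hi ↦ (hdom (hlt i hi)).const_mul (c i))
    have hzero : (fun x ↦ c a + ∑ i ∈ P, c i * (f i x / f a x)) =ᶠ[l] fun _ ↦ 0 := by
      filter_upwards [hf a] with x hx
      calc c a + ∑ i ∈ P, c i * (f i x / f a x)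
          = (c a * f a x + ∑ i ∈ P, c i * f i x) / f a x := by
            rw [add_div, sum_div, mul_div_cancel_right₀ _ hx]
            simp_rw [mul_div_assoc]
        _ = 0 := by rw [hsum x, zero_div]
    have hca : c a = 0 := tendsto_nhds_unique (hlim.congr' hzero) tendsto_const_nhds
    intro i hi
    rcases mem_insert.1 hi with rfl | hi
    · exact hca
    · exact ih (fun x ↦ by simpa [hca] using hsum x) i hi

theorem tendsto_mul_add_mul_sq_atBot {a b : ℝ} (h : b < 0 ∨ b = 0 ∧ a < 0) :
    Tendsto (fun x : ℝ ↦ a * x + b * x ^ 2) atTop atBot := by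
  rcases h with hb | ⟨rfl, ha⟩
  · have hlin : Tendsto (fun x : ℝ ↦ b * x + a) atTop atBot :=
      tendsto_atBot_add_const_right _ a (tendsto_id.const_mul_atTop_of_neg hb)
    exact (tendsto_id.atTop_mul_atBot₀ hlin).congr fun x ↦ by simp only [id]; ring
  · simpa using tendsto_id.const_mul_atTop_of_neg ha

/-- The quadratic coefficient comes first, so that the lexicographic order is the order of
growth. -/
noncomputable def expQuadratic (p : ℝ ×ₗ ℝ) (z : ℕ) : ℝ :=
  Real.exp ((ofLex p).2 * z + (ofLex p).1 * z ^ 2 / 2)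

theorem tendsto_expQuadratic_div {p q : ℝ ×ₗ ℝ} (hpq : p < q) :
    Tendsto (fun z ↦ expQuadratic p z / expQuadratic q z) atTop (𝓝 0) := by
  obtain ⟨⟨b, a⟩, rfl⟩ := toLex.surjective p
  obtain ⟨⟨b', a'⟩, rfl⟩ := toLex.surjective q
  have hexp : Tendsto (fun x : ℝ ↦ (a - a') * x + (b - b') / 2 * x ^ 2) atTop atBot := by
    apply tendsto_mul_add_mul_sq_atBot
    rcases Prod.Lex.toLex_lt_toLex.1 hpq with hb | ⟨hb, ha⟩
    · exact Or.inl (by linarith)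
    · exact Or.inr ⟨by rw [show b = b' from hb, sub_self, zero_div], sub_neg.2 ha⟩
  refine (Real.tendsto_exp_atBot.comp (hexp.comp tendsto_natCast_atTop_atTop)).congr fun z ↦ ?_
  simp only [expQuadratic, ofLex_toLex, Function.comp_apply, ← Real.exp_sub]
  ring_nf

theorem linearIndependent_expQuadratic : LinearIndependent ℝ expQuadratic :=
  linearIndependent_of_tendsto_div_zero (fun _ ↦ .of_forall fun _ ↦ (Real.exp_pos _).ne')
    fun _ _ ↦ tendsto_expQuadratic_div

theorem LinearIndependent.sum_fiber_eq_zero {ι κ R M : Type*} [DecidableEq κ] [Ring R]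
    [AddCommGroup M] [Module R M] {v : κ → M} (hv : LinearIndependent R v) {s : Finset ι}
    {π : ι → κ} {c : ι → R} (hsum : ∑ i ∈ s, c i • v (π i) = 0) (j : κ) :
    ∑ i ∈ s with π i = j, c i = 0 := by
  by_cases hj : j ∈ s.image π
  · refine linearIndependent_iff'.1 hv (s.image π) (fun k ↦ ∑ i ∈ s with π i = k, c i) ?_ j hj
    rw [← hsum, ← sum_fiberwise_of_maps_to fun i hi ↦ mem_image_of_mem π hi]
    refine sum_congr rfl fun k _ ↦ ?_
    rw [sum_smul]
    exact sum_congr rfl fun i hi ↦ by rw [(mem_filter.1 hi).2]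
  · rw [sum_eq_zero]
    intro i hi
    exact absurd (mem_image_of_mem π (mem_filter.1 hi).1) ((mem_filter.1 hi).2 ▸ hj)

theorem stmt_0 (G : ℕ) (ξ σ α : Fin G → ℝ) (s : Fin G)
    (hgood : ∀ g, g ≠ s → ξ g ≠ ξ s)
    (h : ∀ z : ℕ, ∑ g, α g * Real.exp (ξ g * z + σ g * z ^ 2 / 2) = 0) :
    α s = 0 := by
  classical
  have hsum : ∑ g, α g • expQuadratic (toLex (σ g, ξ g)) = 0 := by
    ext z
    simpa [Finset.sum_apply, expQuadratic] using h z
  have hfiber : ({g | toLex (σ g, ξ g) = toLex (σ s, ξ s)} : Finset (Fin G)) = {s} := by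
    ext g
    simp only [mem_filter, mem_univ, true_and, mem_singleton, EmbeddingLike.apply_eq_iff_eq,
      Prod.mk.injEq]
    exact ⟨fun hg ↦ by_contra fun hne ↦ hgood g hne hg.2, by rintro rfl; simp⟩
  have hzero := linearIndependent_expQuadratic.sum_fiber_eq_zero hsum (toLex (σ s, ξ s))
  rwa [hfiber, sum_singleton] at hzero
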